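/- Grinberg's bijection: let A_i = (a+i, 1) for i = 1,...,k with m = a+k, let B_1, ..., B_k be any points on the top row, and let C_i = (m, i) for i = 1,...,k. Then the map replacing, in each disjoint tuple of Up-Right paths from (A_1,...,A_k) to (B_1,...,B_k), the initial horizontal segment of the i-th path from A_i = (a+i, 1) to (a+i, i) by the vertical segment from C_i = (m, i) to (a+i, i), is a bijection between disjoint path tuples from (A_1,...,A_k) to (B_1,...,B_k) and disjoint path tuples from (C_1,...,C_k) to (B_1,...,B_k); moreover this bijection multiplies the weight of each tuple by ∏_{i=1}^{k} [∏_{j=1}^{i} (x_{a+i} + y_j)] / [∏_{s=a+i}^{m} (x_s + y_i)]. -/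

import Mathlib

open Finset

noncomputable section

/-- The field of rational functions over `ℚ` in variables `x_1, x_2, …` and `y_1, y_2, …`. -/
abbrev K : Type := FractionRing (MvPolynomial (ℕ ⊕ ℕ) ℚ)

/-- The variable `x_i` as an element of `K`. -/
def X (i : ℕ) : K := algebraMap (MvPolynomial (ℕ ⊕ ℕ) ℚ) K (MvPolynomial.X (Sum.inl i))

/-- The variable `y_j` as an element of `K`. -/
def Y (j : ℕ) : K := algebraMap (MvPolynomial (ℕ ⊕ ℕ) ℚ) K (MvPolynomial.X (Sum.inr j))

/-- A step of an Up-Right lattice path: `Up` decreases the first (row) coordinate by one,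
`Right` increases the second (column) coordinate by one. -/
def Step (c d : ℕ × ℕ) : Prop :=
  (d.1 + 1 = c.1 ∧ d.2 = c.2) ∨ (d.1 = c.1 ∧ d.2 = c.2 + 1)

/-- `p` is an Up-Right lattice path from cell `A` to cell `B` (listed as its sequence of
visited cells, starting at `A` and ending at `B`). -/
def IsPath (A B : ℕ × ℕ) (p : List (ℕ × ℕ)) : Prop :=
  p.Chain' Step ∧ p.head? = some A ∧ p.getLast? = some B

/-- All cells of `p` lie in the grid `{1,…,m} × {1,…,n}`. -/
def InGrid (m n : ℕ) (p : List (ℕ × ℕ)) : Prop :=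
  ∀ c ∈ p, 1 ≤ c.1 ∧ c.1 ≤ m ∧ 1 ≤ c.2 ∧ c.2 ≤ n

/-- The weight of a path: the product of `1/(x_i + y_j)` over all visited cells `(i,j)`. -/
def pathWeight (x y : ℕ → K) (p : List (ℕ × ℕ)) : K :=
  (p.map fun c => (x c.1 + y c.2)⁻¹).prod

/-- The single-path partition function: the sum of weights of all Up-Right lattice paths
from `A` to `B` inside the grid `{1,…,m} × {1,…,n}`. -/
def F1 (m n : ℕ) (x y : ℕ → K) (A B : ℕ × ℕ) : K :=
  ∑ᶠ p : {p : List (ℕ × ℕ) // IsPath A B p ∧ InGrid m n p}, pathWeight x y p.1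

/-- `γ` is a `k`-tuple of pairwise vertex-disjoint Up-Right lattice paths `γ i : A i → B i`
inside the grid `{1,…,m} × {1,…,n}`. -/
def IsTuple (m n k : ℕ) (A B : Fin k → ℕ × ℕ) (γ : Fin k → List (ℕ × ℕ)) : Prop :=
  (∀ i, IsPath (A i) (B i) (γ i) ∧ InGrid m n (γ i)) ∧
  (∀ i j, i ≠ j → ∀ c ∈ γ i, c ∉ γ j)

/-- The multi-path partition function: the sum, over all `k`-tuples of pairwise disjoint
Up-Right lattice paths `γ i : A i → B i` in the grid `{1,…,m} × {1,…,n}`, of the product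
of `1/(x_i + y_j)` over all visited cells. -/
def Ftuple (m n k : ℕ) (x y : ℕ → K) (A B : Fin k → ℕ × ℕ) : K :=
  ∑ᶠ γ : {γ : Fin k → List (ℕ × ℕ) // IsTuple m n k A B γ}, ∏ i, pathWeight x y (γ.1 i)

/-!
Paths are indexed from `0` by `i : Fin k`, so the Lean path `γ i` is the paper's path `i+1`;
the paper's indexing is used below.

In a disjoint tuple starting at the `A_i`, path `i` cannot leave row `a+i` before column `i`:
the cell above it is taken by path `i-1`, whose first `i-1` cells are `(a+i-1, 1), …,
(a+i-1, i-1)` by induction. Symmetrically, in a tuple starting at the `C_i`, path `i` cannot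
leave column `i` before row `a+i`, the cell to its right being taken by path `i+1` (downward
induction, starting from `C_k = (a+k, k)`). So both kinds of tuples are a forced straight
prefix followed by a tail starting at `(a+i, i)`, and exchanging the prefixes is a bijection.
The new prefixes avoid the other tails because each tail stays weakly above and to the right
of its first cell. The weight changes by the weight of the removed horizontal prefix over
that of the inserted vertical one.
-/

lemma take_eq_map_range {α : Type*} {l : List α} {t : ℕ} {f : ℕ → α}
    (h : ∀ j < t, l[j]? = some (f j)) : l.take t = (List.range t).map f := by
  refine List.ext_getElem? fun j => ?_
  rw [List.getElem?_take, List.getElem?_map]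
  split_ifs with hj
  · rw [h j hj, List.getElem?_range hj]
    rfl
  · rw [List.getElem?_eq_none (by simpa using hj)]
    rfl

section StepChain

variable {p : List (ℕ × ℕ)}

lemma step_getElem_succ (hp : p.IsChain Step) {j : ℕ} (hj : j + 1 < p.length) :
    Step p[j] p[j + 1] :=
  List.isChain_iff_getElem.1 hp j hj

lemma stepChain_getElem_le (hp : p.IsChain Step) {i j : ℕ} (hij : i ≤ j) (hj : j < p.length) :
    p[j].1 ≤ p[i].1 ∧ p[i].2 ≤ p[j].2 := by
  induction j, hij using Nat.le_induction with
  | base => exact ⟨le_rfl, le_rfl⟩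
  | succ j hij ih =>
    have := ih (by omega)
    rcases step_getElem_succ hp hj with ⟨h1, h2⟩ | ⟨h1, h2⟩ <;> omega

lemma stepChain_getElem_add (hp : p.IsChain Step) {j : ℕ} (hj : j < p.length) :
    p[j].2 + p[0].1 = p[0].2 + p[j].1 + j := by
  induction j with
  | zero => rfl
  | succ j ih =>
    have := ih (by omega)
    rcases step_getElem_succ hp hj with ⟨h1, h2⟩ | ⟨h1, h2⟩ <;> omega

lemma stepChain_mem_drop {t : ℕ} {P c : ℕ × ℕ} (hp : p.IsChain Step) (ht : p[t]? = some P)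
    (hc : c ∈ p.drop t) : c.1 ≤ P.1 ∧ P.2 ≤ c.2 := by
  obtain ⟨htlen, rfl⟩ := List.getElem?_eq_some_iff.1 ht
  obtain ⟨j, hj, rfl⟩ := List.mem_iff_getElem.1 hc
  rw [List.getElem_drop]
  exact stepChain_getElem_le hp (Nat.le_add_right t j) _

lemma stepChain_getElem?_of_up_blocked (hp : p.IsChain Step) {r c t : ℕ}
    (h0 : p[0]? = some (r + 1, c)) (hlen : t < p.length) (hblock : ∀ j < t, (r, j + c) ∉ p) :
    ∀ j ≤ t, p[j]? = some (r + 1, j + c) := by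
  intro j hj
  induction j with
  | zero => simpa using h0
  | succ j ih =>
    obtain ⟨_, hpj⟩ := List.getElem?_eq_some_iff.1 (ih (by omega))
    rw [List.getElem?_eq_getElem (by omega), Option.some_inj]
    rcases step_getElem_succ hp (j := j) (by omega) with ⟨h1, h2⟩ | ⟨h1, h2⟩ <;>
      simp only [hpj] at h1 h2
    · have hcell : p[j + 1] = (r, j + c) := Prod.ext (by omega) h2
      exact absurd (hcell ▸ List.getElem_mem _) (hblock j (by omega))
    · exact Prod.ext h1 (by omega)

lemma stepChain_getElem?_of_right_blocked (hp : p.IsChain Step) {r c t : ℕ}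
    (h0 : p[0]? = some (r, c)) (hlen : t < p.length) (hblock : ∀ j < t, (r - j, c + 1) ∉ p) :
    ∀ j ≤ t, p[j]? = some (r - j, c) := by
  intro j hj
  induction j with
  | zero => simpa using h0
  | succ j ih =>
    obtain ⟨_, hpj⟩ := List.getElem?_eq_some_iff.1 (ih (by omega))
    rw [List.getElem?_eq_getElem (by omega), Option.some_inj]
    rcases step_getElem_succ hp (j := j) (by omega) with ⟨h1, h2⟩ | ⟨h1, h2⟩ <;>
      simp only [hpj] at h1 h2
    · exact Prod.ext (by omega) h2
    · have hcell : p[j + 1] = (r - j, c + 1) := Prod.ext h1 h2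
      exact absurd (hcell ▸ List.getElem_mem _) (hblock j (by omega))

end StepChain

section Path

variable {A B : ℕ × ℕ} {p : List (ℕ × ℕ)}

lemma IsPath.getElem?_zero (h : IsPath A B p) : p[0]? = some A := by
  rw [← List.head?_eq_getElem?]
  exact h.2.1

lemma IsPath.getElem?_last (h : IsPath A B p) : p[p.length - 1]? = some B := by
  rw [← List.getLast?_eq_getElem?]
  exact h.2.2

lemma IsPath.length_eq (h : IsPath A B p) : p.length + B.1 + A.2 = A.1 + B.2 + 1 := by
  obtain ⟨h0lt, h0⟩ := List.getElem?_eq_some_iff.1 h.getElem?_zero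
  obtain ⟨hlt, hlast⟩ := List.getElem?_eq_some_iff.1 h.getElem?_last
  have := stepChain_getElem_add h.1 hlt
  simp only [hlast, h0] at this
  omega

lemma IsPath.inGrid {m n : ℕ} (h : IsPath A B p) (hA : A.1 ≤ m ∧ 1 ≤ A.2)
    (hB : 1 ≤ B.1 ∧ B.2 ≤ n) : InGrid m n p := by
  obtain ⟨h0lt, h0⟩ := List.getElem?_eq_some_iff.1 h.getElem?_zero
  obtain ⟨hlt, hlast⟩ := List.getElem?_eq_some_iff.1 h.getElem?_last
  intro c hc
  obtain ⟨j, hj, rfl⟩ := List.mem_iff_getElem.1 hc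
  have hstart := stepChain_getElem_le h.1 (Nat.zero_le j) hj
  have hend := stepChain_getElem_le h.1 (Nat.le_sub_one_of_lt hj) hlt
  rw [h0] at hstart
  rw [hlast] at hend
  omega

lemma IsPath.append_drop {S P : ℕ × ℕ} {s : List (ℕ × ℕ)} {t : ℕ}
    (hs : IsPath S P (s ++ [P])) (hp : IsPath A B p) (ht : p[t]? = some P) :
    IsPath S B (s ++ p.drop t) := by
  obtain ⟨htlen, hPt⟩ := List.getElem?_eq_some_iff.1 ht
  have hdrop : p.drop t = [P] ++ p.drop (t + 1) := by
    rw [List.drop_eq_getElem_cons htlen, hPt]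
    rfl
  refine ⟨?_, ?_, ?_⟩
  · rw [hdrop, ← List.append_assoc]
    exact hs.1.append_overlap (hdrop ▸ hp.1.drop t) (List.cons_ne_nil _ _)
  · rw [hdrop, ← List.append_assoc, List.head?_append, hs.2.1]
    rfl
  · rw [List.getLast?_append_of_ne_nil _ (by simp [hdrop]), List.getLast?_drop,
      if_neg (by omega)]
    exact hp.2.2

end Path

section Run

def colRun (m c t : ℕ) : List (ℕ × ℕ) := (List.range t).map fun r => (m - r, c)

def rowRun (r t : ℕ) : List (ℕ × ℕ) := (List.range t).map fun j => (r, j + 1)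

variable {m c r t : ℕ}

lemma length_colRun : (colRun m c t).length = t := by simp [colRun]

lemma length_rowRun : (rowRun r t).length = t := by simp [rowRun]

lemma mem_colRun {x : ℕ × ℕ} : x ∈ colRun m c t ↔ ∃ i < t, (m - i, c) = x := by
  simp [colRun]

lemma mem_rowRun {x : ℕ × ℕ} : x ∈ rowRun r t ↔ ∃ j < t, (r, j + 1) = x := by
  simp [rowRun]

lemma colRun_succ : colRun m c (t + 1) = colRun m c t ++ [(m - t, c)] := by
  simp [colRun, List.range_succ]

lemma rowRun_succ : rowRun r (t + 1) = rowRun r t ++ [(r, t + 1)] := by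
  simp [rowRun, List.range_succ]

lemma isPath_colRun (ht : t ≤ m) : IsPath (m, c) (m - t, c) (colRun m c (t + 1)) := by
  refine ⟨?_, by simp [colRun, List.range_succ_eq_map], by simp [colRun_succ]⟩
  refine List.isChain_map _ |>.2 <| (List.isChain_range_succ _ t).2 fun i hi => Or.inl ?_
  exact ⟨by dsimp only; omega, rfl⟩

lemma isPath_rowRun : IsPath (r, 1) (r, t + 1) (rowRun r (t + 1)) := by
  refine ⟨?_, by simp [rowRun, List.range_succ_eq_map], by simp [rowRun_succ]⟩
  exact List.isChain_map _ |>.2 <| (List.isChain_range_succ _ t).2 fun _ _ => Or.inr ⟨rfl, rfl⟩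

variable (x y : ℕ → K)

lemma pathWeight_append (l l' : List (ℕ × ℕ)) :
    pathWeight x y (l ++ l') = pathWeight x y l * pathWeight x y l' := by
  simp [pathWeight]

lemma pathWeight_colRun (ht : t ≤ m) :
    pathWeight x y (colRun m c t) = (∏ s ∈ Ioc (m - t) m, (x s + y c))⁻¹ := by
  induction t with
  | zero => simp [pathWeight, colRun]
  | succ t ih =>
    have hIoc : Ioc (m - (t + 1)) m = insert (m - t) (Ioc (m - t) m) := by
      ext s
      simp only [mem_insert, mem_Ioc]
      omega
    rw [colRun_succ, pathWeight_append, ih (by omega), hIoc, prod_insert (by simp), mul_inv,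
      mul_comm]
    simp [pathWeight]

lemma pathWeight_rowRun : pathWeight x y (rowRun r t) = (∏ j ∈ Icc 1 t, (x r + y j))⁻¹ := by
  induction t with
  | zero => simp [pathWeight, rowRun]
  | succ t ih =>
    rw [rowRun_succ, pathWeight_append, ih, prod_Icc_succ_top (by omega), mul_inv]
    simp [pathWeight]

lemma pathWeight_colRun_append (hxy : ∀ s j, x s + y j ≠ 0) (hrm : r ≤ m) (c : ℕ)
    (l : List (ℕ × ℕ)) :
    pathWeight x y (colRun m (c + 1) (m - r) ++ l) =
      pathWeight x y (rowRun r c ++ l) *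
        ((∏ j ∈ Icc 1 (c + 1), (x r + y j)) / ∏ s ∈ Icc r m, (x s + y (c + 1))) := by
  rw [pathWeight_append, pathWeight_append, pathWeight_colRun x y (Nat.sub_le m r),
    pathWeight_rowRun, Nat.sub_sub_self hrm, prod_Icc_succ_top (by omega), Icc_eq_cons_Ioc hrm,
    prod_cons]
  have hrow : ∏ j ∈ Icc 1 c, (x r + y j) ≠ 0 := prod_ne_zero_iff.2 fun j _ => hxy r j
  have hcol : ∏ s ∈ Ioc r m, (x s + y (c + 1)) ≠ 0 := prod_ne_zero_iff.2 fun s _ => hxy s _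
  have hcorner := hxy r (c + 1)
  field_simp

end Run

section Tuple

variable {m n k : ℕ}

lemma IsTuple.splice {A B S P : Fin k → ℕ × ℕ} {γ s : Fin k → List (ℕ × ℕ)}
    {t : Fin k → ℕ}
    (hγ : IsTuple m n k A B γ) (hP : ∀ i, (γ i)[t i]? = some (P i))
    (hs : ∀ i, IsPath (S i) (P i) (s i ++ [P i])) (hS : ∀ i, (S i).1 ≤ m ∧ 1 ≤ (S i).2)
    (hss : ∀ i j, i ≠ j → ∀ c ∈ s i, c ∉ s j)
    (hsγ : ∀ i j, i ≠ j → ∀ c ∈ s i, c ∉ (γ j).drop (t j)) :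
    IsTuple m n k S B (fun i => s i ++ (γ i).drop (t i)) := by
  refine ⟨fun i => ⟨(hs i).append_drop (hγ.1 i).1 (hP i), fun c hc => ?_⟩,
    fun i j hij c hci hcj => ?_⟩
  · rcases List.mem_append.1 hc with hc | hc
    · have hPgrid := (hγ.1 i).2 _ (List.mem_of_getElem? (hP i))
      exact (hs i).inGrid (hS i) ⟨hPgrid.1, hPgrid.2.2.2⟩ c (List.mem_append_left _ hc)
    · exact (hγ.1 i).2 c (List.mem_of_mem_drop hc)
  · rcases List.mem_append.1 hci with hci | hci <;> rcases List.mem_append.1 hcj with hcj | hcj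
    · exact hss i j hij c hci hcj
    · exact hsγ i j hij c hci hcj
    · exact hsγ j i hij.symm c hcj hci
    · exact hγ.2 i j hij c (List.mem_of_mem_drop hci) (List.mem_of_mem_drop hcj)

variable {a : ℕ} {b : Fin k → ℕ}

lemma IsTuple.getElem?_of_rowStarts {γ : Fin k → List (ℕ × ℕ)}
    (hγ : IsTuple m n k (fun i => (a + i + 1, 1)) (fun i => (1, b i)) γ) (i : Fin k) :
    ∀ j ≤ (i : ℕ), (γ i)[j]? = some (a + i + 1, j + 1) := by
  obtain ⟨i, hi⟩ := i
  simp only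
  induction i with
  | zero =>
    intro j hj
    obtain rfl : j = 0 := by omega
    exact (hγ.1 _).1.getElem?_zero
  | succ i ih =>
    have hpath := (hγ.1 ⟨i + 1, hi⟩).1
    have hlen := hpath.length_eq
    have hb := ((hγ.1 ⟨i + 1, hi⟩).2 _ (List.mem_of_getLast? hpath.2.2)).2.2.1
    simp only at hlen hb
    refine stepChain_getElem?_of_up_blocked hpath.1 hpath.getElem?_zero (by omega)
      fun j hj hmem => ?_
    exact hγ.2 ⟨i, by omega⟩ ⟨i + 1, hi⟩ (by simp) _
      (List.mem_of_getElem? (ih (by omega) j (by omega))) hmem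

lemma IsTuple.getElem?_of_colStarts (hm : m = a + k) {δ : Fin k → List (ℕ × ℕ)}
    (hδ : IsTuple m n k (fun i => (m, i + 1)) (fun i => (1, b i)) δ) (i : Fin k) :
    ∀ j ≤ m - (a + i + 1), (δ i)[j]? = some (m - j, (i : ℕ) + 1) := by
  obtain ⟨i, hi⟩ := i
  simp only
  obtain ⟨d, hd⟩ : ∃ d, k = i + 1 + d := ⟨k - (i + 1), by omega⟩
  induction d generalizing i with
  | zero =>
    intro j hj
    obtain rfl : j = 0 := by omega
    simpa using (hδ.1 _).1.getElem?_zero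
  | succ d ih =>
    have hpath := (hδ.1 ⟨i, hi⟩).1
    have hlen := hpath.length_eq
    have hb := ((hδ.1 ⟨i, hi⟩).2 _ (List.mem_of_getLast? hpath.2.2)).2.2.1
    simp only at hlen hb
    refine stepChain_getElem?_of_right_blocked hpath.1 hpath.getElem?_zero (by omega)
      fun j hj hmem => ?_
    exact hδ.2 ⟨i + 1, by omega⟩ ⟨i, hi⟩ (by simp) _
      (List.mem_of_getElem? (ih (i + 1) (by omega) (by omega) j (by omega))) hmem

lemma IsTuple.eq_rowRun_append_drop {γ : Fin k → List (ℕ × ℕ)}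
    (hγ : IsTuple m n k (fun i => (a + i + 1, 1)) (fun i => (1, b i)) γ) (i : Fin k) :
    γ i = rowRun (a + i + 1) i ++ (γ i).drop i := by
  rw [rowRun, ← take_eq_map_range fun j hj => hγ.getElem?_of_rowStarts i j hj.le,
    List.take_append_drop]

lemma IsTuple.eq_colRun_append_drop (hm : m = a + k) {δ : Fin k → List (ℕ × ℕ)}
    (hδ : IsTuple m n k (fun i => (m, i + 1)) (fun i => (1, b i)) δ) (i : Fin k) :
    δ i = colRun m (i + 1) (m - (a + i + 1)) ++ (δ i).drop (m - (a + i + 1)) := by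
  rw [colRun, ← take_eq_map_range fun j hj => hδ.getElem?_of_colStarts hm i j hj.le,
    List.take_append_drop]

end Tuple

section Grinberg

variable {a k n m : ℕ} {b : Fin k → ℕ}

def grinbergMap (a m : ℕ) (γ : Fin k → List (ℕ × ℕ)) (i : Fin k) : List (ℕ × ℕ) :=
  colRun m (i + 1) (m - (a + i + 1)) ++ (γ i).drop i

def grinbergInv (a m : ℕ) (δ : Fin k → List (ℕ × ℕ)) (i : Fin k) : List (ℕ × ℕ) :=
  rowRun (a + i + 1) i ++ (δ i).drop (m - (a + i + 1))

lemma grinbergMap_isTuple (hm : m = a + k) {γ : Fin k → List (ℕ × ℕ)}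
    (hγ : IsTuple m n k (fun i => (a + i + 1, 1)) (fun i => (1, b i)) γ) :
    IsTuple m n k (fun i => (m, i + 1)) (fun i => (1, b i)) (grinbergMap a m γ) := by
  have hcorner (i : Fin k) : (γ i)[(i : ℕ)]? = some (a + i + 1, (i : ℕ) + 1) :=
    hγ.getElem?_of_rowStarts i i le_rfl
  refine hγ.splice hcorner (fun i => ?_) (fun i => ⟨le_rfl, by omega⟩)
    (fun i j hij c hci hcj => ?_) (fun i j hij c hci hcj => ?_)
  · have := isPath_colRun (c := i + 1) (Nat.sub_le m (a + i + 1))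
    rwa [colRun_succ, Nat.sub_sub_self (by omega)] at this
  · obtain ⟨r, -, rfl⟩ := mem_colRun.1 hci
    obtain ⟨r', -, hr'⟩ := mem_colRun.1 hcj
    exact hij (Fin.ext (by simp only [Prod.ext_iff] at hr'; omega))
  · obtain ⟨r, hr, rfl⟩ := mem_colRun.1 hci
    have := stepChain_mem_drop (hγ.1 j).1.1 (hcorner j) hcj
    simp only at this
    omega

lemma grinbergInv_isTuple (hm : m = a + k) {δ : Fin k → List (ℕ × ℕ)}
    (hδ : IsTuple m n k (fun i => (m, i + 1)) (fun i => (1, b i)) δ) :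
    IsTuple m n k (fun i => (a + i + 1, 1)) (fun i => (1, b i)) (grinbergInv a m δ) := by
  have hcorner (i : Fin k) : (δ i)[m - (a + i + 1)]? = some (a + i + 1, (i : ℕ) + 1) := by
    have := hδ.getElem?_of_colStarts hm i _ le_rfl
    rwa [Nat.sub_sub_self (by omega)] at this
  refine hδ.splice hcorner (fun i => ?_) (fun i => ⟨by omega, le_rfl⟩)
    (fun i j hij c hci hcj => ?_) (fun i j hij c hci hcj => ?_)
  · simpa only [rowRun_succ] using isPath_rowRun
  · obtain ⟨r, -, rfl⟩ := mem_rowRun.1 hci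
    obtain ⟨r', -, hr'⟩ := mem_rowRun.1 hcj
    exact hij (Fin.ext (by simp only [Prod.ext_iff] at hr'; omega))
  · obtain ⟨r, hr, rfl⟩ := mem_rowRun.1 hci
    have := stepChain_mem_drop (hδ.1 j).1.1 (hcorner j) hcj
    simp only at this
    omega

lemma grinbergInv_grinbergMap {γ : Fin k → List (ℕ × ℕ)}
    (hγ : IsTuple m n k (fun i => (a + i + 1, 1)) (fun i => (1, b i)) γ) :
    grinbergInv a m (grinbergMap a m γ) = γ := by
  funext i
  rw [grinbergInv, grinbergMap, List.drop_left' length_colRun, ← hγ.eq_rowRun_append_drop i]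

lemma grinbergMap_grinbergInv (hm : m = a + k) {δ : Fin k → List (ℕ × ℕ)}
    (hδ : IsTuple m n k (fun i => (m, i + 1)) (fun i => (1, b i)) δ) :
    grinbergMap a m (grinbergInv a m δ) = δ := by
  funext i
  rw [grinbergMap, grinbergInv, List.drop_left' length_rowRun,
    ← hδ.eq_colRun_append_drop hm i]

lemma bijOn_grinbergMap (hm : m = a + k) :
    Set.BijOn (grinbergMap a m)
      {γ | IsTuple m n k (fun i => (a + i + 1, 1)) (fun i => (1, b i)) γ}
      {δ | IsTuple m n k (fun i => (m, i + 1)) (fun i => (1, b i)) δ} :=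
  Set.InvOn.bijOn
    ⟨fun _ hγ => grinbergInv_grinbergMap hγ, fun _ hδ => grinbergMap_grinbergInv hm hδ⟩
    (fun _ hγ => grinbergMap_isTuple hm hγ) (fun _ hδ => grinbergInv_isTuple hm hδ)

lemma prod_pathWeight_grinbergMap (hm : m = a + k) {x y : ℕ → K}
    (hxy : ∀ s j, x s + y j ≠ 0) {γ : Fin k → List (ℕ × ℕ)}
    (hγ : IsTuple m n k (fun i => (a + i + 1, 1)) (fun i => (1, b i)) γ) :
    ∏ i, pathWeight x y (grinbergMap a m γ i) =
      (∏ i, pathWeight x y (γ i)) *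
        ∏ i : Fin k, (∏ j ∈ Icc 1 ((i : ℕ) + 1), (x (a + i + 1) + y j)) /
          ∏ s ∈ Icc (a + i + 1) m, (x s + y ((i : ℕ) + 1)) := by
  rw [← prod_mul_distrib]
  refine prod_congr rfl fun i _ => ?_
  rw [grinbergMap, pathWeight_colRun_append x y hxy (by omega), ← hγ.eq_rowRun_append_drop i]

end Grinberg

lemma X_add_Y_ne_zero (s j : ℕ) : X s + Y j ≠ 0 := by
  rw [X, Y, ← map_add]
  refine (map_ne_zero_iff _ (IsFractionRing.injective _ K)).2 fun h => ?_
  simpa using congrArg (MvPolynomial.eval fun v => if v = Sum.inl s then (1 : ℚ) else 0) h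

theorem stmt19_general (a k n m : ℕ) (hm : m = a + k) (b : Fin k → ℕ) :
    Set.BijOn
      (fun (γ : Fin k → List (ℕ × ℕ)) (i : Fin k) =>
        ((List.range (m - (a + (i : ℕ) + 1))).map fun r => (m - r, (i : ℕ) + 1))
          ++ (γ i).drop (i : ℕ))
      {γ | IsTuple m n k (fun i => (a + (i : ℕ) + 1, 1)) (fun i => (1, b i)) γ}
      {γ | IsTuple m n k (fun i => (m, (i : ℕ) + 1)) (fun i => (1, b i)) γ} ∧
    ∀ γ : Fin k → List (ℕ × ℕ),
      IsTuple m n k (fun i => (a + (i : ℕ) + 1, 1)) (fun i => (1, b i)) γ →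
      (∏ i : Fin k, pathWeight X Y
          (((List.range (m - (a + (i : ℕ) + 1))).map fun r => (m - r, (i : ℕ) + 1))
            ++ (γ i).drop (i : ℕ))) =
        (∏ i : Fin k, pathWeight X Y (γ i)) *
          ∏ i : Fin k,
            (∏ j ∈ Finset.Icc 1 ((i : ℕ) + 1), (X (a + (i : ℕ) + 1) + Y j)) /
              (∏ s ∈ Finset.Icc (a + (i : ℕ) + 1) m, (X s + Y ((i : ℕ) + 1))) :=
  ⟨bijOn_grinbergMap hm, fun _ hγ => prod_pathWeight_grinbergMap hm X_add_Y_ne_zero hγ⟩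

/-- Grinberg's bijection: with `A_i = (a+i, 1)`, `C_i = (m, i)` (`m = a+k`) and arbitrary
top-row endpoints `B_i = (1, b_i)`, the map replacing the initial horizontal segment
`(a+i,1), …, (a+i,i)` of the `i`-th path by the vertical segment `(m,i), …, (a+i,i)` is a
bijection between disjoint Up-Right path tuples from `(A_1,…,A_k)` to `(B_1,…,B_k)` and
those from `(C_1,…,C_k)` to `(B_1,…,B_k)`, and it multiplies the weight of each tuple by
`∏_{i=1}^k [∏_{j=1}^i (x_{a+i}+y_j)] / [∏_{s=a+i}^m (x_s+y_i)]`.  (The `i`-th new path is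
the vertical run of cells `(m, i), (m−1, i), …, (a+i+1, i)` followed by the old path with
its first `i−1` cells removed, which starts at `(a+i, i)`.) -/
theorem stmt19 (a k n m : ℕ) (hm : m = a + k) (b : Fin k → ℕ)
    (hb1 : ∀ i, 1 ≤ b i) (hbn : ∀ i, b i ≤ n) :
    Set.BijOn
      (fun (γ : Fin k → List (ℕ × ℕ)) (i : Fin k) =>
        ((List.range (m - (a + (i : ℕ) + 1))).map fun r => (m - r, (i : ℕ) + 1))
          ++ (γ i).drop (i : ℕ))
      {γ | IsTuple m n k (fun i => (a + (i : ℕ) + 1, 1)) (fun i => (1, b i)) γ}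
      {γ | IsTuple m n k (fun i => (m, (i : ℕ) + 1)) (fun i => (1, b i)) γ} ∧
    ∀ γ : Fin k → List (ℕ × ℕ),
      IsTuple m n k (fun i => (a + (i : ℕ) + 1, 1)) (fun i => (1, b i)) γ →
      (∏ i : Fin k, pathWeight X Y
          (((List.range (m - (a + (i : ℕ) + 1))).map fun r => (m - r, (i : ℕ) + 1))
            ++ (γ i).drop (i : ℕ))) =
        (∏ i : Fin k, pathWeight X Y (γ i)) *
          ∏ i : Fin k,
            (∏ j ∈ Finset.Icc 1 ((i : ℕ) + 1), (X (a + (i : ℕ) + 1) + Y j)) /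
              (∏ s ∈ Finset.Icc (a + (i : ℕ) + 1) m, (X s + Y ((i : ℕ) + 1))) :=
  stmt19_general a k n m hm b
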